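/- arXiv:1006.5652 — 2 statements merged into one kernel-verified Lean document; each statement's English description precedes it below -/
import Mathlib

section
/- Let q > 0, q ≠ 1, and R_q = 2/(1-q) if 0 < q < 1, R_q = 2q/(q-1) if q > 1. Then for every nonzero complex z such that |z| < R_q and |qz| < R_q, the Jackson q-derivative of 𝓔_q equals the average of 𝓔_q at z and qz: (𝓔_q(qz) − 𝓔_q(z))/((q−1)z) = (𝓔_q(z) + 𝓔_q(qz))/2, where 𝓔_q(z) = ∑_{n=0}^∞ z^n/{n}_q!. -/
/-!
Termwise, `D_q z^{n+1} = (q^{n+1} - 1)/(q - 1) · zⁿ` and `⟨zⁿ⟩ = (1 + qⁿ)/2 · zⁿ`, and `{n+1}_q` is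
exactly the ratio of these two factors; hence the coefficients `1/{n}_q!` turn the Jackson derivative
of the series into its average term by term. Both series converge by the ratio test, since
`{n+1}_q → R_q`; the case `q > 1` reduces to `q < 1` through the symmetry `{n}_{1/q} = {n}_q`.
-/

/-- The symbol `{n}_q = 2(1-q^n)/((1-q)(1+q^(n-1)))` (for `n ≥ 1`). -/
noncomputable def qBrace (q : ℝ) (n : ℕ) : ℝ :=
  2 * (1 - q ^ n) / ((1 - q) * (1 + q ^ (n - 1)))

/-- The factorial `{n}_q! = {1}_q {2}_q ⋯ {n}_q`, with `{0}_q! = 1`. -/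
noncomputable def qBraceFact (q : ℝ) (n : ℕ) : ℝ := ∏ k ∈ Finset.range n, qBrace q (k + 1)

/-- The radius `R_q = 2/(1-q)` for `0 < q < 1` and `R_q = 2q/(q-1)` for `q > 1`. -/
noncomputable def Rq (q : ℝ) : ℝ := if q < 1 then 2 / (1 - q) else 2 * q / (q - 1)

/-- The improved q-exponential function `𝓔_q(z) = ∑_{n=0}^∞ z^n/{n}_q!`. -/
noncomputable def impExp (q : ℝ) (z : ℂ) : ℂ := ∑' n : ℕ, z ^ n / (qBraceFact q n : ℂ)

open Filter Topology Finset

theorem qBrace_succ_mul {q : ℝ} (hq1 : q ≠ 1) {n : ℕ} (hn : 1 + q ^ n ≠ 0) :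
    (q - 1) * (1 + q ^ n) * qBrace q (n + 1) = 2 * (q ^ (n + 1) - 1) := by
  have : q - 1 ≠ 0 := sub_ne_zero.2 hq1
  have : 1 - q ≠ 0 := sub_ne_zero.2 hq1.symm
  rw [qBrace, add_tsub_cancel_right]
  field_simp
  ring

theorem qBrace_succ_ne_zero {q : ℝ} (hq : 0 < q) (hq1 : q ≠ 1) (n : ℕ) :
    qBrace q (n + 1) ≠ 0 := by
  intro h
  have := qBrace_succ_mul hq1 (n := n) (by positivity)
  rw [h, mul_zero, eq_comm, mul_eq_zero, sub_eq_zero,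
    pow_eq_one_iff_of_nonneg hq.le n.succ_ne_zero] at this
  exact this.elim (by norm_num) hq1

theorem qBraceFact_succ (q : ℝ) (n : ℕ) :
    qBraceFact q (n + 1) = qBraceFact q n * qBrace q (n + 1) :=
  prod_range_succ _ _

theorem qBraceFact_ne_zero {q : ℝ} (hq : 0 < q) (hq1 : q ≠ 1) (n : ℕ) : qBraceFact q n ≠ 0 :=
  prod_ne_zero_iff.2 fun k _ => qBrace_succ_ne_zero hq hq1 k

theorem inv_qBraceFact_recurrence {q : ℝ} (hq : 0 < q) (hq1 : q ≠ 1) (n : ℕ) :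
    2 * (q ^ (n + 1) - 1) * (qBraceFact q (n + 1))⁻¹ =
      (q - 1) * (1 + q ^ n) * (qBraceFact q n)⁻¹ := by
  have := qBraceFact_ne_zero hq hq1 n
  have := qBrace_succ_ne_zero hq hq1 n
  rw [qBraceFact_succ, ← qBrace_succ_mul hq1 (by positivity)]
  field_simp

theorem qBrace_inv (q : ℝ) (n : ℕ) : qBrace q⁻¹ n = qBrace q n := by
  rcases eq_or_ne q 0 with rfl | hq
  · simp
  cases n with
  | zero => simp [qBrace]
  | succ m =>
    have : -q⁻¹ ^ (m + 1) ≠ 0 := by simp [hq]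
    rw [qBrace, qBrace, add_tsub_cancel_right,
      ← mul_div_mul_right (2 * (1 - q ^ (m + 1))) _ this]
    congr 1 <;> simp only [inv_pow] <;> field_simp <;> ring

theorem Rq_inv_of_one_lt {q : ℝ} (hq : 1 < q) : Rq q⁻¹ = Rq q := by
  have : q - 1 ≠ 0 := by linarith
  rw [Rq, Rq, if_pos (inv_lt_one_of_one_lt₀ hq), if_neg hq.not_gt]
  field_simp

theorem tendsto_qBrace_succ_of_abs_lt_one {q : ℝ} (hq : |q| < 1) :
    Tendsto (fun n => qBrace q (n + 1)) atTop (𝓝 (2 / (1 - q))) := by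
  have hpow := tendsto_pow_atTop_nhds_zero_of_abs_lt_one hq
  have h1q : (1 - q) * (1 + 0) ≠ 0 := by linarith [le_abs_self q]
  have hnum := ((tendsto_const_nhds (x := (1 : ℝ))).sub
    (hpow.comp (tendsto_add_atTop_nat 1))).const_mul 2
  have := hnum.div ((tendsto_const_nhds.add hpow).const_mul (1 - q)) h1q
  simp only [qBrace, add_tsub_cancel_right]
  convert this using 2 <;> simp

theorem tendsto_qBrace_succ {q : ℝ} (hq : 0 < q) (hq1 : q ≠ 1) :
    Tendsto (fun n => qBrace q (n + 1)) atTop (𝓝 (Rq q)) := by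
  rcases hq1.lt_or_gt with h | h
  · rw [Rq, if_pos h]
    exact tendsto_qBrace_succ_of_abs_lt_one (abs_lt.2 ⟨by linarith, h⟩)
  · rw [← Rq_inv_of_one_lt h, Rq, if_pos (inv_lt_one_of_one_lt₀ h)]
    simpa only [qBrace_inv] using tendsto_qBrace_succ_of_abs_lt_one (q := q⁻¹)
      (by rw [abs_inv, abs_of_pos hq]; exact inv_lt_one_of_one_lt₀ h)

theorem summable_pow_div_prod {𝕜 : Type*} [NormedField 𝕜] [CompleteSpace 𝕜] {b : ℕ → 𝕜}
    {R : ℝ} (hb : Tendsto (fun n => ‖b n‖) atTop (𝓝 R)) {z : 𝕜} (hz : ‖z‖ < R) :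
    Summable fun n => z ^ n / ∏ k ∈ range n, b k := by
  have hR : 0 < R := (norm_nonneg z).trans_lt hz
  obtain ⟨r, hzr, hr1⟩ : ∃ r, ‖z‖ / R < r ∧ r < 1 := exists_between ((div_lt_one hR).2 hz)
  have hr : 0 < r := (div_nonneg (norm_nonneg z) hR.le).trans_lt hzr
  have hev : ∀ᶠ n in atTop, ‖z‖ / r < ‖b n‖ :=
    hb.eventually (eventually_gt_nhds ((div_lt_iff₀ hr).2 ((div_lt_iff₀' hR).1 hzr)))
  refine summable_of_ratio_norm_eventually_le hr1 ?_
  filter_upwards [hev] with n hn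
  have hbn : 0 < ‖b n‖ := (div_nonneg (norm_nonneg z) hr.le).trans_lt hn
  rw [prod_range_succ, pow_succ, norm_div, norm_div, norm_mul, norm_mul, norm_pow,
    mul_div_mul_comm, mul_comm r]
  gcongr
  rw [div_le_iff₀ hbn, mul_comm]
  exact ((div_lt_iff₀ hr).1 hn).le

theorem hasSum_impExp {q : ℝ} (hq : 0 < q) (hq1 : q ≠ 1) {z : ℂ} (hz : ‖z‖ < Rq q) :
    HasSum (fun n => z ^ n / (qBraceFact q n : ℂ)) (impExp q z) := by
  have hb : Tendsto (fun k => ‖(qBrace q (k + 1) : ℂ)‖) atTop (𝓝 ‖(Rq q : ℂ)‖) :=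
    ((Complex.continuous_ofReal.tendsto _).comp (tendsto_qBrace_succ hq hq1)).norm
  have := summable_pow_div_prod hb (hz.trans_le (by simpa using le_abs_self (Rq q)))
  simpa [qBraceFact, impExp] using this.hasSum

/-- `hc` says `D_q (c_{n+1} z^{n+1}) = ⟨cₙ zⁿ⟩`; the conclusion is `D_q f = ⟨f⟩` for `f = ∑ cₙ zⁿ`,
with denominators cleared. -/
theorem two_mul_sub_eq_of_hasSum {𝕜 : Type*} [NormedField 𝕜] {c : ℕ → 𝕜} {q z f₀ f₁ : 𝕜}
    (hc : ∀ n, 2 * (q ^ (n + 1) - 1) * c (n + 1) = (q - 1) * (1 + q ^ n) * c n)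
    (h₀ : HasSum (fun n => z ^ n * c n) f₀) (h₁ : HasSum (fun n => (q * z) ^ n * c n) f₁) :
    2 * (f₁ - f₀) = (q - 1) * z * (f₀ + f₁) := by
  have hL := (hasSum_nat_add_iff' 1).2 ((h₁.sub h₀).mul_left 2)
  simp only [sum_range_one, pow_zero, sub_self, mul_zero, sub_zero] at hL
  have hterm (n : ℕ) : (q - 1) * z * (z ^ n * c n + (q * z) ^ n * c n) =
      2 * ((q * z) ^ (n + 1) * c (n + 1) - z ^ (n + 1) * c (n + 1)) := by
    linear_combination -z ^ (n + 1) * hc n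
  exact hL.unique (by simpa only [hterm] using (h₀.add h₁).mul_left ((q - 1) * z))

/-- The Jackson q-derivative of `𝓔_q` equals the average `⟨𝓔_q⟩`:
`(𝓔_q(qz) − 𝓔_q(z))/((q−1)z) = (𝓔_q(z) + 𝓔_q(qz))/2`. -/
theorem jackson_deriv_impExp (q : ℝ) (hq : 0 < q) (hq1 : q ≠ 1) (z : ℂ) (hz0 : z ≠ 0)
    (hz : ‖z‖ < Rq q) (hqz : ‖(q : ℂ) * z‖ < Rq q) :
    (impExp q ((q : ℂ) * z) - impExp q z) / (((q : ℂ) - 1) * z) =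
      (impExp q z + impExp q ((q : ℂ) * z)) / 2 := by
  have hq1' : (q : ℂ) - 1 ≠ 0 := sub_ne_zero.2 (by exact_mod_cast hq1)
  rw [div_eq_div_iff (mul_ne_zero hq1' hz0) two_ne_zero]
  have key := two_mul_sub_eq_of_hasSum (q := (q : ℂ)) (c := fun n => (qBraceFact q n : ℂ)⁻¹)
    (fun n => by exact_mod_cast inv_qBraceFact_recurrence hq hq1 n)
    (by simpa only [div_eq_mul_inv] using hasSum_impExp hq hq1 hz)
    (by simpa only [div_eq_mul_inv] using hasSum_impExp hq hq1 hqz)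
  linear_combination key
end

section
/- Let q > 0, q ≠ 1, and R_q = 2/(1-q) if 0 < q < 1, R_q = 2q/(q-1) if q > 1. Then for every real x with |x| < R_q/2: Cos_q(2x) = cos_q(x)·COS_q(x) − sin_q(x)·SIN_q(x) and Sin_q(2x) = sin_q(x)·COS_q(x) + cos_q(x)·SIN_q(x), where Sin_q, Cos_q are the improved q-trigonometric functions built from 𝓔_q(z) = ∑_{n=0}^∞ z^n/{n}_q!, and sin_q, cos_q, SIN_q, COS_q are the standard q-trigonometric functions built from e_q(z) = ∑_{n=0}^∞ z^n/[n]_q! and E_q(z) = ∑_{n=0}^∞ q^{n(n-1)/2} z^n/[n]_q!. -/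
/-!
Both identities are the even and odd parts of `𝓔_q(2z) = e_q(z) E_q(z)` at `z = ± i x`.
Comparing coefficients in the Cauchy product, this product formula is Gauss' identity
`∑ₖ q^(k(k-1)/2) [n, k]_q = ∏_{j<n} (1 + q^j)` for the Gaussian binomial coefficients, because
`{n}_q! ∏_{j<n} (1 + q^j) = 2^n [n]_q!`. Both series converge absolutely for `|z| < R_q/2`: for
`q < 1` by the ratio test (the ratio tends to `|z|(1 - q)`), and for `q > 1` because
`[n]_q! = q^(n(n-1)/2) [n]_{1/q}!` turns the series of `e_q` and `E_q` into those of `E_{1/q}`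
and `e_{1/q}`.
-/

/-- The q-integer `[k]_q = 1 + q + q^2 + ⋯ + q^(k-1)`. -/
noncomputable def qInt (q : ℝ) (k : ℕ) : ℝ := ∑ i ∈ Finset.range k, q ^ i

/-- The q-factorial `[n]_q! = [1]_q [2]_q ⋯ [n]_q`, with `[0]_q! = 1`. -/
noncomputable def qFact (q : ℝ) (n : ℕ) : ℝ := ∏ k ∈ Finset.range n, qInt q (k + 1)

/-- The first q-exponential `e_q(z) = ∑_{n=0}^∞ z^n/[n]_q!`. -/
noncomputable def qExp (q : ℝ) (z : ℂ) : ℂ := ∑' n : ℕ, z ^ n / (qFact q n : ℂ)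

/-- The second q-exponential `E_q(z) = ∑_{n=0}^∞ q^(n(n-1)/2) z^n/[n]_q!`. -/
noncomputable def qExp' (q : ℝ) (z : ℂ) : ℂ :=
  ∑' n : ℕ, (q : ℂ) ^ (n * (n - 1) / 2) * z ^ n / (qFact q n : ℂ)

/-- The standard q-sine `sin_q(x) = (e_q(ix) − e_q(−ix))/(2i)`. -/
noncomputable def qSin (q : ℝ) (x : ℝ) : ℂ :=
  (qExp q (Complex.I * x) - qExp q (-(Complex.I * x))) / (2 * Complex.I)

/-- The standard q-cosine `cos_q(x) = (e_q(ix) + e_q(−ix))/2`. -/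
noncomputable def qCos (q : ℝ) (x : ℝ) : ℂ :=
  (qExp q (Complex.I * x) + qExp q (-(Complex.I * x))) / 2

/-- The standard q-sine `Sin_q(x) = (E_q(ix) − E_q(−ix))/(2i)`. -/
noncomputable def qSin' (q : ℝ) (x : ℝ) : ℂ :=
  (qExp' q (Complex.I * x) - qExp' q (-(Complex.I * x))) / (2 * Complex.I)

/-- The standard q-cosine `Cos_q(x) = (E_q(ix) + E_q(−ix))/2`. -/
noncomputable def qCos' (q : ℝ) (x : ℝ) : ℂ :=
  (qExp' q (Complex.I * x) + qExp' q (-(Complex.I * x))) / 2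

/-- The improved q-sine `Sin_q(x) = (𝓔_q(ix) − 𝓔_q(−ix))/(2i)`. -/
noncomputable def impSin (q : ℝ) (x : ℝ) : ℂ :=
  (impExp q (Complex.I * x) - impExp q (-(Complex.I * x))) / (2 * Complex.I)

/-- The improved q-cosine `Cos_q(x) = (𝓔_q(ix) + 𝓔_q(−ix))/2`. -/
noncomputable def impCos (q : ℝ) (x : ℝ) : ℂ :=
  (impExp q (Complex.I * x) + impExp q (-(Complex.I * x))) / 2

open Finset Filter Topology

lemma succ_mul_self_div_two (n : ℕ) : (n + 1) * n / 2 = n * (n - 1) / 2 + n := by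
  have := Nat.choose_succ_succ n 1
  rw [Nat.choose_two_right, Nat.choose_two_right, Nat.choose_one_right] at this
  simpa [add_comm] using this

section QInt

variable {q : ℝ}

lemma qInt_succ_pos (hq : 0 < q) (k : ℕ) : 0 < qInt q (k + 1) :=
  sum_pos (fun i _ => pow_pos hq i) nonempty_range_add_one

lemma qInt_add (a b : ℕ) : qInt q (a + b) = qInt q a + q ^ a * qInt q b := by
  simp [qInt, sum_range_add, pow_add, mul_sum]

lemma qInt_mul_one_sub (k : ℕ) : qInt q k * (1 - q) = 1 - q ^ k :=
  geom_sum_mul_neg q k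

lemma tendsto_qInt (hq₀ : 0 ≤ q) (hq₁ : q < 1) : Tendsto (qInt q) atTop (𝓝 (1 - q)⁻¹) :=
  (hasSum_geometric_of_lt_one hq₀ hq₁).tendsto_sum_nat

lemma pow_mul_qInt_inv (hq : q ≠ 0) (k : ℕ) : q ^ k * qInt q⁻¹ (k + 1) = qInt q (k + 1) := by
  rw [qInt, qInt, mul_sum]
  conv_rhs => rw [← sum_range_reflect]
  refine sum_congr rfl fun i hi => ?_
  rw [inv_pow, ← pow_sub₀ q hq (mem_range_succ_iff.mp hi), Nat.add_sub_cancel]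

@[simp]
lemma qFact_zero : qFact q 0 = 1 :=
  prod_range_zero _

lemma qFact_succ (n : ℕ) : qFact q (n + 1) = qFact q n * qInt q (n + 1) :=
  prod_range_succ _ n

lemma qFact_pos (hq : 0 < q) (n : ℕ) : 0 < qFact q n :=
  prod_pos fun k _ => qInt_succ_pos hq k

lemma qFact_eq_pow_mul_qFact_inv (hq : q ≠ 0) (n : ℕ) :
    qFact q n = q ^ (n * (n - 1) / 2) * qFact q⁻¹ n := by
  induction n with
  | zero => simp
  | succ n ih =>
    rw [qFact_succ, qFact_succ, ih, ← pow_mul_qInt_inv hq, Nat.add_sub_cancel,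
      succ_mul_self_div_two, pow_add]
    ring

end QInt

noncomputable def qBinom (q : ℝ) : ℕ → ℕ → ℝ
  | 0, 0 => 1
  | 0, _ + 1 => 0
  | _ + 1, 0 => 1
  | n + 1, k + 1 => qBinom q n (k + 1) + q ^ (n - k) * qBinom q n k

section QBinom

variable {q : ℝ}

@[simp]
lemma qBinom_zero_right (n : ℕ) : qBinom q n 0 = 1 := by
  cases n <;> rfl

lemma qBinom_eq_zero_of_lt : ∀ {n k : ℕ}, n < k → qBinom q n k = 0
  | 0, _ + 1, _ => rfl
  | n + 1, k + 1, h => by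
    rw [qBinom, qBinom_eq_zero_of_lt (by omega), qBinom_eq_zero_of_lt (by omega), mul_zero,
      add_zero]

@[simp]
lemma qBinom_self : ∀ n : ℕ, qBinom q n n = 1
  | 0 => rfl
  | n + 1 => by rw [qBinom, qBinom_eq_zero_of_lt (Nat.lt_succ_self n), qBinom_self n]; simp

lemma qBinom_mul_qFact_mul_qFact :
    ∀ {n k : ℕ}, k ≤ n → qBinom q n k * (qFact q k * qFact q (n - k)) = qFact q n
  | _, 0, _ => by simp
  | n + 1, k + 1, h => by
    rcases (Nat.le_of_succ_le_succ h).eq_or_lt with rfl | hk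
    · simp
    obtain ⟨m, rfl⟩ : ∃ m, n = k + 1 + m := ⟨n - (k + 1), by omega⟩
    have ih₁ := qBinom_mul_qFact_mul_qFact (n := k + 1 + m) (k := k + 1) (by omega)
    have ih₂ := qBinom_mul_qFact_mul_qFact (n := k + 1 + m) (k := k) (by omega)
    have hsplit := qInt_add (q := q) (m + 1) (k + 1)
    rw [show m + 1 + (k + 1) = k + 1 + m + 1 by omega] at hsplit
    rw [show k + 1 + m - (k + 1) = m by omega, qFact_succ k] at ih₁
    rw [show k + 1 + m - k = m + 1 by omega, qFact_succ m] at ih₂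
    rw [qBinom, show k + 1 + m + 1 - (k + 1) = m + 1 by omega, show k + 1 + m - k = m + 1 by omega,
      qFact_succ (k + 1 + m), qFact_succ m, qFact_succ k, hsplit]
    linear_combination qInt q (m + 1) * ih₁ + q ^ (m + 1) * qInt q (k + 1) * ih₂

end QBinom

lemma sum_pow_mul_qBinom (q : ℝ) (n : ℕ) :
    ∑ k ∈ range (n + 1), q ^ (k * (k - 1) / 2) * qBinom q n k = ∏ j ∈ range n, (1 + q ^ j) := by
  induction n with
  | zero => simp
  | succ n ih =>
    set f : ℕ → ℝ := fun k => q ^ (k * (k - 1) / 2) * qBinom q n k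
    have hshift : ∑ k ∈ range (n + 1), f k
        = ∑ j ∈ range (n + 1), q ^ ((j + 1) * j / 2) * qBinom q n (j + 1) + 1 := by
      have h := (sum_range_succ f (n + 1)).symm.trans (sum_range_succ' f (n + 1))
      simpa [f, qBinom_eq_zero_of_lt (Nat.lt_succ_self n)] using h
    have hpascal : ∀ j ∈ range (n + 1), q ^ ((j + 1) * j / 2) * (q ^ (n - j) * qBinom q n j)
        = q ^ n * f j := by
      intro j hj
      have hexp : (j + 1) * j / 2 + (n - j) = n + j * (j - 1) / 2 := by
        rw [succ_mul_self_div_two]; have := mem_range_succ_iff.mp hj; omega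
      rw [← mul_assoc, ← pow_add, hexp, pow_add, mul_assoc]
    rw [sum_range_succ', prod_range_succ, ← ih]
    simp only [Nat.add_sub_cancel, qBinom, mul_add, sum_add_distrib]
    rw [sum_congr rfl hpascal, ← mul_sum, hshift]
    simp only [zero_mul, Nat.zero_div, pow_zero]
    ring

section Coefficients

variable {q : ℝ}

lemma qBrace_succ (hq : 0 < q) (hq1 : q ≠ 1) (k : ℕ) :
    qBrace q (k + 1) = 2 * qInt q (k + 1) / (1 + q ^ k) := by
  have : 1 - q ≠ 0 := sub_ne_zero.mpr hq1.symm
  rw [qBrace, Nat.add_sub_cancel, ← qInt_mul_one_sub]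
  field_simp

lemma qBraceFact_eq (hq : 0 < q) (hq1 : q ≠ 1) (n : ℕ) :
    qBraceFact q n = 2 ^ n * qFact q n / ∏ j ∈ range n, (1 + q ^ j) := by
  rw [qBraceFact, qFact, prod_congr rfl fun k _ => qBrace_succ hq hq1 k, prod_div_distrib,
    prod_mul_distrib, prod_const, card_range]

lemma qBraceFact_pos (hq : 0 < q) (hq1 : q ≠ 1) (n : ℕ) : 0 < qBraceFact q n := by
  rw [qBraceFact_eq hq hq1]
  have := qFact_pos hq n
  exact div_pos (by positivity) (prod_pos fun j _ => by positivity)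

lemma sum_range_pow_div_qFact_mul_qFact (hq : 0 < q) (hq1 : q ≠ 1) (n : ℕ) :
    ∑ k ∈ range (n + 1), q ^ (k * (k - 1) / 2) / (qFact q k * qFact q (n - k))
      = 2 ^ n / qBraceFact q n := by
  have hF := (qFact_pos hq n).ne'
  have hterm : ∀ k ∈ range (n + 1), q ^ (k * (k - 1) / 2) / (qFact q k * qFact q (n - k))
      = q ^ (k * (k - 1) / 2) * qBinom q n k / qFact q n := by
    intro k hk
    rw [eq_div_iff hF, ← qBinom_mul_qFact_mul_qFact (mem_range_succ_iff.mp hk)]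
    have := qFact_pos hq k
    have := qFact_pos hq (n - k)
    field_simp
  rw [sum_congr rfl hterm, ← sum_div, sum_pow_mul_qBinom, qBraceFact_eq hq hq1]
  have : 0 < ∏ j ∈ range n, (1 + q ^ j) := prod_pos fun j _ => by positivity
  field_simp

end Coefficients

section Summability

variable {q r : ℝ}

lemma summable_pow_div_qFact (hq : 0 < q) (hq1 : q < 1) (hr : 0 ≤ r) (hrq : r < (1 - q)⁻¹) :
    Summable fun n => r ^ n / qFact q n := by
  have hratio : Tendsto (fun n => r / qInt q (n + 1)) atTop (𝓝 (r * (1 - q))) := by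
    have h := tendsto_const_nhds (x := r) |>.div
      ((tendsto_qInt hq.le hq1).comp (tendsto_add_atTop_nat 1)) (inv_ne_zero (sub_ne_zero.mpr hq1.ne'))
    rwa [div_inv_eq_mul] at h
  have hlt : r * (1 - q) < 1 := by
    rwa [← one_div, lt_div_iff₀ (by linarith)] at hrq
  have hnonneg (n : ℕ) : 0 ≤ r ^ n / qFact q n := div_nonneg (pow_nonneg hr n) (qFact_pos hq n).le
  obtain ⟨c, hc, hc1⟩ := exists_between hlt
  refine summable_of_ratio_norm_eventually_le hc1 ?_
  filter_upwards [hratio.eventually_le_const hc] with n hn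
  have hF := (qFact_pos hq n).ne'
  have hI := (qInt_succ_pos hq n).ne'
  rw [Real.norm_of_nonneg (hnonneg _), Real.norm_of_nonneg (hnonneg _), pow_succ, qFact_succ]
  calc r ^ n * r / (qFact q n * qInt q (n + 1)) = r / qInt q (n + 1) * (r ^ n / qFact q n) := by
        field_simp
    _ ≤ c * (r ^ n / qFact q n) := mul_le_mul_of_nonneg_right hn (hnonneg n)

lemma summable_pow_mul_pow_div_qFact (hq : 0 < q) (hq1 : q < 1) (hr : 0 ≤ r)
    (hrq : r < (1 - q)⁻¹) : Summable fun n => q ^ (n * (n - 1) / 2) * r ^ n / qFact q n := by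
  refine (summable_pow_div_qFact hq hq1 hr hrq).of_nonneg_of_le (fun n => ?_) fun n => ?_
  · have := qFact_pos hq n
    positivity
  · exact div_le_div_of_nonneg_right
      (mul_le_of_le_one_left (pow_nonneg hr n) (pow_le_one₀ hq.le hq1.le)) (qFact_pos hq n).le

lemma summable_qExp_qExp'_terms (hq : 0 < q) (hq1 : q ≠ 1) (hr : 0 ≤ r) (hrq : r < Rq q / 2) :
    (Summable fun n => r ^ n / qFact q n) ∧
      Summable fun n => q ^ (n * (n - 1) / 2) * r ^ n / qFact q n := by
  rcases hq1.lt_or_gt with hlt | hgt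
  · have hR : Rq q / 2 = (1 - q)⁻¹ := by rw [Rq, if_pos hlt]; ring
    rw [hR] at hrq
    exact ⟨summable_pow_div_qFact hq hlt hr hrq, summable_pow_mul_pow_div_qFact hq hlt hr hrq⟩
  · have hp : 0 < q⁻¹ := inv_pos.mpr hq
    have hp1 : q⁻¹ < 1 := inv_lt_one_of_one_lt₀ hgt
    have hR : Rq q / 2 = (1 - q⁻¹)⁻¹ := by
      have : q - 1 ≠ 0 := sub_ne_zero.mpr hgt.ne'
      rw [Rq, if_neg hgt.not_gt]
      field_simp
    rw [hR] at hrq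
    have he : (fun n => r ^ n / qFact q n)
        = fun n => q⁻¹ ^ (n * (n - 1) / 2) * r ^ n / qFact q⁻¹ n := by
      funext n
      rw [qFact_eq_pow_mul_qFact_inv hq.ne', inv_pow]
      ring
    have hE : (fun n => q ^ (n * (n - 1) / 2) * r ^ n / qFact q n)
        = fun n => r ^ n / qFact q⁻¹ n := by
      funext n
      rw [qFact_eq_pow_mul_qFact_inv hq.ne', mul_div_mul_left _ _ (pow_ne_zero _ hq.ne')]
    rw [he, hE]
    exact ⟨summable_pow_mul_pow_div_qFact hp hp1 hr hrq, summable_pow_div_qFact hp hp1 hr hrq⟩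

end Summability

lemma impExp_two_mul {q : ℝ} (hq : 0 < q) (hq1 : q ≠ 1) {z : ℂ} (hz : ‖z‖ < Rq q / 2) :
    impExp q (2 * z) = qExp q z * qExp' q z := by
  obtain ⟨he, hE⟩ := summable_qExp_qExp'_terms hq hq1 (norm_nonneg z) hz
  have hF (n : ℕ) : ‖(qFact q n : ℂ)‖ = qFact q n := by
    rw [Complex.norm_real, Real.norm_of_nonneg (qFact_pos hq n).le]
  have he' : Summable fun n => ‖z ^ n / (qFact q n : ℂ)‖ :=
    he.congr fun n => by rw [norm_div, norm_pow, hF]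
  have hE' : Summable fun n => ‖(q : ℂ) ^ (n * (n - 1) / 2) * z ^ n / (qFact q n : ℂ)‖ :=
    hE.congr fun n => by
      rw [norm_div, norm_mul, norm_pow, norm_pow, hF, Complex.norm_real, Real.norm_of_nonneg hq.le]
  rw [mul_comm (qExp q z), impExp, qExp, qExp', tsum_mul_tsum_eq_tsum_sum_range_of_summable_norm hE' he']
  refine tsum_congr fun n => ?_
  have hterm : ∀ k ∈ range (n + 1),
      (q : ℂ) ^ (k * (k - 1) / 2) * z ^ k / (qFact q k : ℂ) * (z ^ (n - k) / (qFact q (n - k) : ℂ))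
        = z ^ n * ((q ^ (k * (k - 1) / 2) / (qFact q k * qFact q (n - k)) : ℝ) : ℂ) := by
    intro k hk
    have h₁ : (qFact q k : ℂ) ≠ 0 := Complex.ofReal_ne_zero.mpr (qFact_pos hq k).ne'
    have h₂ : (qFact q (n - k) : ℂ) ≠ 0 := Complex.ofReal_ne_zero.mpr (qFact_pos hq (n - k)).ne'
    rw [← pow_mul_pow_sub z (mem_range_succ_iff.mp hk)]
    push_cast
    field_simp
  have hB : (qBraceFact q n : ℂ) ≠ 0 := Complex.ofReal_ne_zero.mpr (qBraceFact_pos hq hq1 n).ne'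
  rw [sum_congr rfl hterm, ← mul_sum, ← Complex.ofReal_sum,
    sum_range_pow_div_qFact_mul_qFact hq hq1, mul_pow]
  push_cast
  field_simp

/-- For `|x| < R_q/2`: `Cos_q(2x) = cos_q(x)·Cos_q(x) − sin_q(x)·Sin_q(x)` and
`Sin_q(2x) = sin_q(x)·Cos_q(x) + cos_q(x)·Sin_q(x)`. -/
theorem improved_qTrig_double_angle (q : ℝ) (hq : 0 < q) (hq1 : q ≠ 1) (x : ℝ)
    (hx : |x| < Rq q / 2) :
    impCos q (2 * x) = qCos q x * qCos' q x - qSin q x * qSin' q x ∧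
    impSin q (2 * x) = qSin q x * qCos' q x + qCos q x * qSin' q x := by
  have hix : ‖Complex.I * x‖ < Rq q / 2 := by simpa using hx
  have hplus : impExp q (Complex.I * ↑(2 * x)) = qExp q (Complex.I * x) * qExp' q (Complex.I * x) := by
    rw [← impExp_two_mul hq hq1 hix]
    push_cast
    ring_nf
  have hminus : impExp q (-(Complex.I * ↑(2 * x)))
      = qExp q (-(Complex.I * x)) * qExp' q (-(Complex.I * x)) := by
    rw [← impExp_two_mul hq hq1 (by rwa [norm_neg])]
    push_cast
    ring_nf
  constructor
  · rw [impCos, qCos, qCos', qSin, qSin', hplus, hminus]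
    field_simp
    linear_combination (qExp q (Complex.I * x) - qExp q (-(Complex.I * x))) *
      (qExp' q (Complex.I * x) - qExp' q (-(Complex.I * x))) * Complex.I_sq
  · rw [impSin, qSin, qCos', qCos, qSin', hplus, hminus]
    field_simp
    ring
end
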